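/- arXiv:2507.10353 — 2 statements merged into one kernel-verified Lean document; each statement's English description precedes it below -/
import Mathlib

section
/- Let G be a topological group acting continuously on itself by left multiplication. Then the compact-open topology on G induced by this action (subbasic open sets [K, O] = {g : gK ⊆ O} for K ⊆ G compact, O ⊆ G open) coincides with the original topology of G. -/
/-- `[K, U]` is the preimage of a compact-open subbasic set under the continuous map
`M → C(X, X)` induced by the action. -/
theorem isOpen_setOf_forall_smul_mem {M X : Type*} [TopologicalSpace M] [TopologicalSpace X]
    [SMul M X] [ContinuousSMul M X] {K U : Set X} (hK : IsCompact K) (hU : IsOpen U) :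
    IsOpen {g : M | ∀ x ∈ K, g • x ∈ U} := by
  let act : M → C(X, X) := fun g ↦ ⟨(g • ·), continuous_const_smul g⟩
  have hact : Continuous act := ContinuousMap.continuous_of_continuous_uncurry act continuous_smul
  exact (ContinuousMap.isOpen_setOfPred_mapsTo hK hU).preimage hact

/-- For the left translation action of a topological group on itself, the
compact-open topology (subbasic sets `[K, O] = {g | ∀ x ∈ K, g * x ∈ O}` for `K`
compact, `O` open) coincides with the original topology of `G`. -/
theorem stmt_6 {G : Type*} [Group G] [ts : TopologicalSpace G] [IsTopologicalGroup G] :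
    TopologicalSpace.generateFrom
      {S : Set G | ∃ (K O : Set G), IsCompact K ∧ IsOpen O ∧
        S = {g : G | ∀ x ∈ K, g * x ∈ O}} = ts := by
  apply le_antisymm
  · -- every open `U` is `[{1}, U]`
    intro U hU
    exact TopologicalSpace.isOpen_generateFrom_of_mem
      ⟨{1}, U, isCompact_singleton, hU, by simp⟩
  · apply le_generateFrom
    rintro _ ⟨K, O, hK, hO, rfl⟩
    exact isOpen_setOf_forall_smul_mem (M := G) hK hO
end

section
/- In the hyperspace of nonempty closed subsets of [0,1] × [0,1] with the Vietoris topology, composition of closed relations is not jointly continuous; concretely, for R = ([0,½] × {0}) ∪ ([½,1] × {1}) fixed, the map S ↦ R ∘ S is not continuous at S = {0} × [0,½], since R ∘ S = {(0,0), (0,1)} but R ∘ ({0} × [0,a]) = {(0,0)} for every a < ½. -/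
open unitInterval Topology

/-- Composition of binary relations: `(x, y) ∈ R ∘ S` iff `∃ z, (x,z) ∈ S ∧ (z,y) ∈ R`. -/
def rcomp {X : Type*} (R S : Set (X × X)) : Set (X × X) :=
  {p | ∃ z, (p.1, z) ∈ S ∧ (z, p.2) ∈ R}

/-- The Vietoris topology on the powerset of a topological space. -/
def vietoris (X : Type*) [TopologicalSpace X] : TopologicalSpace (Set X) :=
  TopologicalSpace.generateFrom
    {T : Set (Set X) | ∃ W : Set X, IsOpen W ∧
      (T = {F | F ⊆ W} ∨ T = {F | (F ∩ W).Nonempty})}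

/-- The closed relation `R = ([0,½] × {0}) ∪ ([½,1] × {1})` on `[0,1]`. -/
def Rrel : Set (I × I) :=
  {p | ((p.1 : ℝ) ≤ 1 / 2 ∧ p.2 = 0) ∨ (1 / 2 ≤ (p.1 : ℝ) ∧ p.2 = 1)}

/-- The closed relation `S = {0} × [0,½]` on `[0,1]`. -/
def Srel : Set (I × I) := {p | p.1 = 0 ∧ (p.2 : ℝ) ≤ 1 / 2}

def Sa (a : ℝ) : Set (I × I) := {p | p.1 = 0 ∧ (p.2 : ℝ) ≤ a}

-- half as element of I
noncomputable def half : I := ⟨1/2, by norm_num, by norm_num⟩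

lemma part1 : rcomp Rrel Srel = ({((0 : I), (0 : I)), ((0 : I), (1 : I))} : Set (I × I)) := by
  ext ⟨x, y⟩
  simp only [rcomp, Rrel, Srel, Set.mem_setOf_eq, Set.mem_insert_iff, Set.mem_singleton_iff,
    Prod.mk.injEq]
  constructor
  · rintro ⟨z, ⟨hx, hz⟩, h | h⟩
    · exact Or.inl ⟨hx, h.2⟩
    · exact Or.inr ⟨hx, h.2⟩
  · rintro (⟨hx, hy⟩ | ⟨hx, hy⟩)
    · exact ⟨0, ⟨hx, by norm_num⟩, Or.inl ⟨by norm_num, hy⟩⟩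
    · exact ⟨half, ⟨hx, le_refl _⟩, Or.inr ⟨le_refl _, hy⟩⟩

lemma part2 (a : ℝ) (h0 : 0 ≤ a) (h2 : a < 1/2) :
    rcomp Rrel (Sa a) = ({((0 : I), (0 : I))} : Set (I × I)) := by
  ext ⟨x, y⟩
  simp only [rcomp, Rrel, Sa, Set.mem_setOf_eq, Set.mem_singleton_iff, Prod.mk.injEq]
  constructor
  · rintro ⟨z, ⟨hx, hz⟩, h | h⟩
    · exact ⟨hx, h.2⟩
    · linarith [h.1]
  · rintro ⟨hx, hy⟩
    exact ⟨0, ⟨hx, by norm_num; exact h0⟩, Or.inl ⟨by norm_num, hy⟩⟩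

lemma Sa_closed (a : ℝ) : IsClosed (Sa a) := by
  have h1 : IsClosed {p : I × I | p.1 = 0} :=
    isClosed_singleton.preimage continuous_fst
  have h2 : IsClosed {p : I × I | (p.2 : ℝ) ≤ a} :=
    isClosed_Iic.preimage (continuous_subtype_val.comp continuous_snd)
  exact h1.inter h2

lemma Sa_subset (a : ℝ) (ha : a ≤ 1/2) : Sa a ⊆ Srel := by
  rintro ⟨x, y⟩ ⟨hx, hy⟩
  exact ⟨hx, le_trans hy ha⟩

lemma key : ∀ N : Set (Set (I × I)),
    TopologicalSpace.GenerateOpen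
      {T : Set (Set (I × I)) | ∃ W : Set (I × I), IsOpen W ∧
        (T = {F | F ⊆ W} ∨ T = {F | (F ∩ W).Nonempty})} N →
    Srel ∈ N →
    ∃ b : ℝ, 0 ≤ b ∧ b < 1/2 ∧ ∀ a, b ≤ a → a < 1/2 → Sa a ∈ N := by
  intro N hN
  induction hN with
  | basic T hT =>
    intro hS
    obtain ⟨W, hW, hT | hT⟩ := hT
    · subst hT
      refine ⟨0, le_refl _, by norm_num, fun a hb ha => ?_⟩
      exact (Sa_subset a ha.le).trans hS
    · subst hT
      obtain ⟨⟨x, t⟩, ⟨hx, ht⟩, hWp⟩ := hS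
      rcases lt_or_eq_of_le ht with ht' | ht'
      · refine ⟨(t : ℝ), t.2.1, ht', fun a hb ha => ?_⟩
        subst hx
        exact ⟨(0, t), ⟨rfl, hb⟩, hWp⟩
      · -- t = 1/2; find a point of W with second coord < 1/2
        subst hx
        have hg : Continuous (fun s : ℝ => ((0 : I), Set.projIcc 0 1 zero_le_one s)) :=
          (continuous_const.prodMk (continuous_projIcc))
        have hpre : IsOpen ((fun s : ℝ => ((0 : I), Set.projIcc 0 1 zero_le_one s)) ⁻¹' W) :=
          hW.preimage hg
        have hmem : (1/2 : ℝ) ∈ (fun s : ℝ => ((0 : I), Set.projIcc 0 1 zero_le_one s)) ⁻¹' W := by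
          have h12 : Set.projIcc 0 1 zero_le_one (1/2 : ℝ) = t := by
            apply Subtype.ext
            rw [Set.projIcc_of_mem _ (by constructor <;> norm_num : (1/2:ℝ) ∈ Set.Icc (0:ℝ) 1)]
            exact ht'.symm
          rw [Set.mem_preimage, h12]
          exact hWp
        have hclo : (1/2 : ℝ) ∈ closure (Set.Ioo (0:ℝ) (1/2)) := by
          rw [closure_Ioo (by norm_num : (0:ℝ) ≠ 1/2)]
          constructor <;> norm_num
        rw [mem_closure_iff_nhds] at hclo
        obtain ⟨s, hsU, hs0, hs2⟩ := hclo _ (hpre.mem_nhds hmem)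
        set t' : I := ⟨s, hs0.le, by linarith⟩ with ht'def
        have hproj : Set.projIcc 0 1 zero_le_one s = t' :=
          Set.projIcc_of_mem _ ⟨hs0.le, by linarith⟩
        refine ⟨s, hs0.le, hs2, fun a hb ha => ?_⟩
        refine ⟨((0 : I), t'), ⟨rfl, hb⟩, ?_⟩
        rw [← hproj]
        exact hsU
  | univ => exact fun _ => ⟨0, le_refl _, by norm_num, fun _ _ _ => trivial⟩
  | inter U V hU hV ihU ihV =>
    rintro ⟨h1, h2⟩
    obtain ⟨b1, hb10, hb12, hb1⟩ := ihU h1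
    obtain ⟨b2, hb20, hb22, hb2⟩ := ihV h2
    exact ⟨max b1 b2, le_max_of_le_left hb10, max_lt hb12 hb22,
      fun a hb ha => ⟨hb1 a (le_trans (le_max_left _ _) hb) ha,
        hb2 a (le_trans (le_max_right _ _) hb) ha⟩⟩
  | sUnion S hS ih =>
    rintro ⟨U, hU, hmem⟩
    obtain ⟨b, hb0, hb2, hb⟩ := ih U hU hmem
    exact ⟨b, hb0, hb2, fun a h1 h2 => ⟨U, hU, hb a h1 h2⟩⟩

/-- Composition of closed relations on `[0,1]` is not continuous in the Vietoris
topology: `R ∘ S = {(0,0), (0,1)}`, while `R ∘ ({0} × [0,a]) = {(0,0)}` for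
`0 ≤ a < ½`; there is a Vietoris-open neighborhood `W` of `R ∘ S` such that every
Vietoris-open neighborhood of `S` contains a closed relation `S'` with `R ∘ S' ∉ W`. -/
theorem stmt_16 :
    rcomp Rrel Srel = ({((0 : I), (0 : I)), ((0 : I), (1 : I))} : Set (I × I)) ∧
    (∀ a : ℝ, 0 ≤ a → a < 1 / 2 →
      rcomp Rrel {p : I × I | p.1 = 0 ∧ (p.2 : ℝ) ≤ a} =
        ({((0 : I), (0 : I))} : Set (I × I))) ∧
    (∃ W : Set (Set (I × I)), IsOpen[vietoris (I × I)] W ∧ rcomp Rrel Srel ∈ W ∧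
      ∀ N : Set (Set (I × I)), IsOpen[vietoris (I × I)] N → Srel ∈ N →
        ∃ S' : Set (I × I), IsClosed S' ∧ S' ∈ N ∧ rcomp Rrel S' ∉ W) := by
  refine ⟨part1, fun a h0 h2 => part2 a h0 h2, ?_⟩
  set V : Set (I × I) := {p | 1/2 < (p.2 : ℝ)} with hVdef
  have hV : IsOpen V := isOpen_Ioi.preimage (continuous_subtype_val.comp continuous_snd)
  refine ⟨{F | (F ∩ V).Nonempty}, ?_, ?_, ?_⟩
  · exact TopologicalSpace.GenerateOpen.basic _ ⟨V, hV, Or.inr rfl⟩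
  · refine ⟨((0 : I), (1 : I)), ?_, ?_⟩
    · rw [part1]; exact Or.inr rfl
    · show (1/2 : ℝ) < ((1 : I) : ℝ)
      norm_num
  · intro N hN hS
    obtain ⟨b, hb0, hb2, hb⟩ := key N hN hS
    refine ⟨Sa b, Sa_closed b, hb b (le_refl _) hb2, ?_⟩
    rw [part2 b hb0 hb2]
    rintro ⟨p, hp1, hp2⟩
    rw [Set.mem_singleton_iff] at hp1
    subst hp1
    have : (1/2 : ℝ) < ((0 : I) : ℝ) := hp2
    norm_num at this
end
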